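/- arXiv:2508.02948 — 2 statements merged into one kernel-verified Lean document; each statement's English description precedes it below -/
import Mathlib

section
/- Let τ be a geometric random variable with success probability p ∈ (0,1), and let C ≥ 1 be an integer. Then E[min(τ-1, C)] ≥ (1/e) · min(E[τ-1], C), where E[τ-1] = (1-p)/p. -/
/-- For `τ ∼ Geo(p)` and an integer `C ≥ 1`,
`E[min(τ-1, C)] ≥ (1/e)·min(E[τ-1], C)` where `E[τ-1] = (1-p)/p`. -/
theorem geometric_expectation_min_capped_lower_bound (p : ℝ) (hp : 0 < p) (hp1 : p < 1)
    (C : ℕ) (hC : 1 ≤ C) :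
    ∑' k : ℕ, (1 - p) ^ k * p * (min k C : ℝ)
      ≥ (1 / Real.exp 1) * min ((1 - p) / p) (C : ℝ) := by
  set q : ℝ := 1 - p with hqdef
  have hq0 : 0 < q := by rw [hqdef]; linarith
  have hq1 : q < 1 := by rw [hqdef]; linarith
  have hpq : 1 - q = p := by rw [hqdef]; ring
  have hgeo : Summable (fun k : ℕ => q ^ k) := summable_geometric_of_lt_one hq0.le hq1
  -- tail sums of the geometric distribution
  have htail : ∀ n : ℕ, ∑' k : ℕ, (if n ≤ k then q ^ k * p else 0) = q ^ n := by
    intro n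
    have hs : Summable (fun k : ℕ => if n ≤ k then q ^ k * p else 0) := by
      apply Summable.of_nonneg_of_le _ _ (hgeo.mul_right p)
      · intro k; split <;> positivity
      · intro k; split
        · exact le_refl _
        · positivity
    have h1 := Summable.sum_add_tsum_nat_add (f := fun k : ℕ => if n ≤ k then q ^ k * p else 0) n hs
    have h2 : ∑ i ∈ Finset.range n, (if n ≤ i then q ^ i * p else 0) = 0 := by
      apply Finset.sum_eq_zero
      intro i hi
      rw [if_neg]
      simp only [Finset.mem_range] at hi; omega
    have h3 : (∑' i : ℕ, (if n ≤ i + n then q ^ (i + n) * p else 0))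
        = ∑' i : ℕ, q ^ i * (q ^ n * p) := by
      congr 1; funext i
      rw [if_pos (by omega), pow_add]; ring
    rw [h2, zero_add, h3] at h1
    rw [← h1, tsum_mul_right, tsum_geometric_of_lt_one hq0.le hq1, hpq]
    field_simp
  -- pointwise rewriting of min as a finite sum
  have hpt : ∀ k : ℕ, q ^ k * p * (min k C : ℝ)
      = ∑ j ∈ Finset.range C, (if j + 1 ≤ k then q ^ k * p else 0) := by
    intro k
    rw [Finset.sum_ite, Finset.sum_const, Finset.sum_const_zero, add_zero]
    have : Finset.filter (fun j => j + 1 ≤ k) (Finset.range C) = Finset.range (min k C) := by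
      ext j; simp; omega
    rw [this, Finset.card_range, nsmul_eq_mul]
    push_cast
    ring
  have hsum : ∀ j ∈ Finset.range C,
      Summable (fun k : ℕ => if j + 1 ≤ k then q ^ k * p else 0) := by
    intro j _
    apply Summable.of_nonneg_of_le _ _ (hgeo.mul_right p)
    · intro k; split <;> positivity
    · intro k; split
      · exact le_refl _
      · positivity
  have key : ∑' k : ℕ, q ^ k * p * (min k C : ℝ) = ∑ j ∈ Finset.range C, q ^ (j + 1) := by
    calc ∑' k : ℕ, q ^ k * p * (min k C : ℝ)
        = ∑' k : ℕ, ∑ j ∈ Finset.range C, (if j + 1 ≤ k then q ^ k * p else 0) := by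
          congr 1; funext k; exact hpt k
      _ = ∑ j ∈ Finset.range C, ∑' k : ℕ, (if j + 1 ≤ k then q ^ k * p else 0) :=
          Summable.tsum_finsetSum hsum
      _ = ∑ j ∈ Finset.range C, q ^ (j + 1) := by
          apply Finset.sum_congr rfl; intro j _; exact htail (j + 1)
  rw [key]
  -- the geometric sum formula
  have hgs : ∑ j ∈ Finset.range C, q ^ (j + 1) = q * ((1 - q ^ C) / p) := by
    have h4 : ∑ j ∈ Finset.range C, q ^ (j + 1) = q * ∑ j ∈ Finset.range C, q ^ j := by
      rw [Finset.mul_sum]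
      apply Finset.sum_congr rfl; intro j _; rw [pow_succ]; ring
    rw [h4, geom_sum_eq (by linarith) C, ← hpq, ← neg_sub (1:ℝ) q,
      ← neg_sub (1:ℝ) (q ^ C), neg_div_neg_eq]
  have hC1 : (1 : ℝ) ≤ (C : ℝ) := by exact_mod_cast hC
  have hCpos : (0 : ℝ) < C := by linarith
  have hCne : (C : ℝ) ≠ 0 := ne_of_gt hCpos
  have hexp : (0 : ℝ) < Real.exp 1 := Real.exp_pos 1
  have he2 : (2 : ℝ) < Real.exp 1 := by
    have h := Real.exp_one_gt_d9; norm_num at h; linarith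
  -- Bernoulli : 2 ≤ (1 + 1/C)^C
  have hbern : (2 : ℝ) ≤ (1 + 1 / (C : ℝ)) ^ C := by
    have h0 : (0 : ℝ) ≤ 1 / (C : ℝ) := by positivity
    have h := one_add_mul_le_pow (a := 1 / (C : ℝ)) (by linarith) C
    rw [mul_one_div, div_self hCne] at h
    linarith
  -- (1 + 1/C)^C ≤ e
  have hltexp : (1 + 1 / (C : ℝ)) ^ C ≤ Real.exp 1 := by
    have h1 : (1 + 1 / (C : ℝ)) ≤ Real.exp (1 / (C : ℝ)) := by
      have := Real.add_one_le_exp (1 / (C : ℝ)); linarith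
    have h2 : (1 + 1 / (C : ℝ)) ^ C ≤ Real.exp (1 / (C : ℝ)) ^ C :=
      pow_le_pow_left₀ (by positivity) h1 C
    have h3 : Real.exp (1 / (C : ℝ)) ^ C = Real.exp 1 := by
      rw [← Real.exp_nat_mul, mul_one_div, div_self hCne]
    linarith [h2, h3.le, h3.ge]
  -- product identity: (C/(C+1))^C * (1+1/C)^C = 1
  have hprod : ((C : ℝ) / (C + 1)) ^ C * (1 + 1 / (C : ℝ)) ^ C = 1 := by
    rw [← mul_pow]
    have : ((C : ℝ) / (C + 1)) * (1 + 1 / (C : ℝ)) = 1 := by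
      field_simp
    rw [this, one_pow]
  have hApos : (0 : ℝ) < ((C : ℝ) / (C + 1)) ^ C := by positivity
  rcases le_total (q / p) (C : ℝ) with h | h
  · -- case q/p ≤ C
    rw [min_eq_left h, hgs]
    have hqle : q ≤ (C : ℝ) / (C + 1) := by
      rw [div_le_iff₀ hp] at h
      rw [le_div_iff₀ (by linarith : (0:ℝ) < (C:ℝ) + 1)]
      rw [← hpq] at h
      nlinarith
    have hqC : q ^ C ≤ ((C : ℝ) / (C + 1)) ^ C := pow_le_pow_left₀ hq0.le hqle C
    have hhalf : ((C : ℝ) / (C + 1)) ^ C ≤ 1 / 2 := by nlinarith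
    have h1e : 1 / Real.exp 1 ≤ 1 - q ^ C := by
      have : 1 / Real.exp 1 ≤ 1 / 2 := by
        rw [div_le_div_iff₀ hexp (by norm_num)]; linarith
      linarith
    calc (1 / Real.exp 1) * (q / p) ≤ (1 - q ^ C) * (q / p) :=
          mul_le_mul_of_nonneg_right h1e (by positivity)
      _ = q * ((1 - q ^ C) / p) := by ring
  · -- case C ≤ q/p
    rw [min_eq_right h]
    have hqge : (C : ℝ) / (C + 1) ≤ q := by
      rw [le_div_iff₀ hp] at h
      rw [div_le_iff₀ (by linarith : (0:ℝ) < (C:ℝ) + 1)]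
      rw [← hpq] at h
      nlinarith
    have hqC : ((C : ℝ) / (C + 1)) ^ C ≤ q ^ C := pow_le_pow_left₀ (by positivity) hqge C
    have hAe : 1 / Real.exp 1 ≤ ((C : ℝ) / (C + 1)) ^ C := by
      rw [div_le_iff₀ hexp]
      nlinarith
    have hsumge : (C : ℝ) * q ^ C ≤ ∑ j ∈ Finset.range C, q ^ (j + 1) := by
      have : ∑ j ∈ Finset.range C, q ^ C ≤ ∑ j ∈ Finset.range C, q ^ (j + 1) := by
        apply Finset.sum_le_sum
        intro j hj
        simp only [Finset.mem_range] at hj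
        exact pow_le_pow_of_le_one hq0.le hq1.le (by omega)
      rwa [Finset.sum_const, Finset.card_range, nsmul_eq_mul] at this
    have : (1 / Real.exp 1) * (C : ℝ) ≤ (C : ℝ) * q ^ C := by
      have h5 : 1 / Real.exp 1 ≤ q ^ C := le_trans hAe hqC
      nlinarith
    linarith
end

section
/- Fix a finite state space S, a probability mass function P⋆ on S, σ > 0, and two functions V̄, V̲ : S → [0, H] with V̲ ≤ V̄ pointwise. Let Φ(W) = sup_{η ∈ [η̲, H/σ]} { -η log(E_{P⋆}[exp(-W/η)]) - η σ } for η̲ > 0. Then Φ(V̄) - Φ(V̲) ≤ exp(H/η̲) · E_{P⋆}[V̄ - V̲]. -/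
/-!
For each fixed `η`, the two dual objectives differ by `η (log B - log A)`, where
`A = E[exp(-V̄/η)] ≤ B = E[exp(-V̲/η)]`. Since `log(1 + x) ≤ x` this is at most `η (B - A) / A`;
`x ↦ exp(-x/η)` is `1/η`-Lipschitz on `[0, ∞)`, so `B - A ≤ E[V̄ - V̲] / η`, and `V̄ ≤ H` gives
`A ≥ exp(-H/η) ≥ exp(-H/η̲)`. A uniform-in-`η` bound passes to the suprema.
-/

open Real Finset

lemma sSup_sub_sSup_le_of_le_add {ι : Type*} {s : Set ι} {f g : ι → ℝ} {C : ℝ} (hC : 0 ≤ C)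
    (hg : BddAbove (g '' s)) (hfg : ∀ i ∈ s, f i ≤ g i + C) :
    sSup {y | ∃ i ∈ s, y = f i} - sSup {y | ∃ i ∈ s, y = g i} ≤ C := by
  have himage : ∀ h : ι → ℝ, {y | ∃ i ∈ s, y = h i} = h '' s := fun h => by
    ext; simp [eq_comm]
  rw [himage f, himage g]
  rcases s.eq_empty_or_nonempty with rfl | hs
  · simpa using hC
  rw [sub_le_iff_le_add]
  refine csSup_le (hs.image f) (Set.forall_mem_image.2 fun i hi => ?_)
  linarith [hfg i hi, le_csSup hg (Set.mem_image_of_mem g hi)]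

lemma exp_sub_exp_le_sub_of_le_of_nonpos {a b : ℝ} (hba : b ≤ a) (ha : a ≤ 0) :
    exp a - exp b ≤ a - b := by
  have hsplit : exp a - exp b = exp a * (1 - exp (b - a)) := by
    rw [mul_sub, ← exp_add]; ring_nf
  have hexp : 1 - exp (b - a) ≤ a - b := by linarith [add_one_le_exp (b - a)]
  rw [hsplit]
  exact (mul_le_of_le_one_left (sub_nonneg.2 (exp_le_one_iff.2 (sub_nonpos.2 hba)))
    (exp_le_one_iff.2 ha)).trans hexp

section ExpMoment

variable {S : Type*} [Fintype S] {P : S → ℝ}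

noncomputable def expMoment (P W : S → ℝ) (η : ℝ) : ℝ :=
  ∑ s, P s * exp (-(W s) / η)

/-- The objective `-η log E_P[exp(-W/η)] - ησ` of the dual of the KL-robust expectation. -/
noncomputable def klDual (P : S → ℝ) (σ : ℝ) (W : S → ℝ) (η : ℝ) : ℝ :=
  -η * log (expMoment P W η) - η * σ

lemma le_sum_mul_of_forall_le (hP : ∀ s, 0 ≤ P s) (hP1 : ∑ s, P s = 1) {f : S → ℝ} {c : ℝ}
    (hf : ∀ s, c ≤ f s) : c ≤ ∑ s, P s * f s :=
  calc c = ∑ s, P s * c := by rw [← sum_mul, hP1, one_mul]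
    _ ≤ ∑ s, P s * f s := sum_le_sum fun s _ => mul_le_mul_of_nonneg_left (hf s) (hP s)

lemma exp_neg_div_le_expMoment (hP : ∀ s, 0 ≤ P s) (hP1 : ∑ s, P s = 1) {W : S → ℝ} {M η : ℝ}
    (hW : ∀ s, W s ≤ M) (hη : 0 < η) : exp (-M / η) ≤ expMoment P W η :=
  le_sum_mul_of_forall_le hP hP1 fun s =>
    exp_le_exp.2 (div_le_div_of_nonneg_right (neg_le_neg (hW s)) hη.le)

lemma klDual_le (hP : ∀ s, 0 ≤ P s) (hP1 : ∑ s, P s = 1) {σ M η : ℝ} {W : S → ℝ}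
    (hσ : 0 ≤ σ) (hW : ∀ s, W s ≤ M) (hη : 0 < η) : klDual P σ W η ≤ M := by
  have hexp := exp_neg_div_le_expMoment hP hP1 hW hη
  have hlog : -M / η ≤ log (expMoment P W η) :=
    (le_log_iff_exp_le ((exp_pos _).trans_le hexp)).2 hexp
  have hmul : -M ≤ η * log (expMoment P W η) := by
    simpa [mul_div_cancel₀ _ hη.ne'] using mul_le_mul_of_nonneg_left hlog hη.le
  unfold klDual
  linarith [mul_nonneg hη.le hσ]

lemma expMoment_sub_expMoment_le (hP : ∀ s, 0 ≤ P s) {V W : S → ℝ} {η : ℝ} (hη : 0 < η)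
    (hV : ∀ s, 0 ≤ V s) (hVW : ∀ s, V s ≤ W s) :
    expMoment P V η - expMoment P W η ≤ (∑ s, P s * (W s - V s)) / η := by
  rw [expMoment, expMoment, ← sum_sub_distrib, sum_div]
  refine sum_le_sum fun s _ => ?_
  rw [← mul_sub, mul_div_assoc]
  refine mul_le_mul_of_nonneg_left ?_ (hP s)
  calc exp (-V s / η) - exp (-W s / η) ≤ -V s / η - -W s / η :=
        exp_sub_exp_le_sub_of_le_of_nonpos
          (div_le_div_of_nonneg_right (neg_le_neg (hVW s)) hη.le)
          (div_nonpos_of_nonpos_of_nonneg (neg_nonpos.2 (hV s)) hη.le)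
    _ = (W s - V s) / η := by ring

lemma klDual_le_klDual_add (hP : ∀ s, 0 ≤ P s) (hP1 : ∑ s, P s = 1) (σ : ℝ) {H η : ℝ}
    {V W : S → ℝ} (hη : 0 < η) (hV : ∀ s, 0 ≤ V s) (hVW : ∀ s, V s ≤ W s) (hWH : ∀ s, W s ≤ H) :
    klDual P σ W η ≤ klDual P σ V η + exp (H / η) * ∑ s, P s * (W s - V s) := by
  set A := expMoment P W η
  set B := expMoment P V η
  have hexpA : exp (-H / η) ≤ A := exp_neg_div_le_expMoment hP hP1 hWH hη
  have hA : 0 < A := (exp_pos _).trans_le hexpA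
  have hgap : 0 ≤ ∑ s, P s * (W s - V s) :=
    sum_nonneg fun s _ => mul_nonneg (hP s) (sub_nonneg.2 (hVW s))
  have hB : 0 < B :=
    (exp_pos _).trans_le (exp_neg_div_le_expMoment hP hP1 (fun s => (hVW s).trans (hWH s)) hη)
  have hinvA : 1 / A ≤ exp (H / η) := by
    simpa [neg_div, ← exp_neg] using one_div_le_one_div_of_le (exp_pos _) hexpA
  have hlog : log B - log A ≤ (B - A) / A := by
    rw [← log_div hB.ne' hA.ne', sub_div, div_self hA.ne']
    exact log_le_sub_one_of_pos (div_pos hB hA)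
  have hdiff : η * (log B - log A) ≤ exp (H / η) * ∑ s, P s * (W s - V s) :=
    calc η * (log B - log A) ≤ η * ((B - A) / A) := mul_le_mul_of_nonneg_left hlog hη.le
      _ ≤ η * ((∑ s, P s * (W s - V s)) / η / A) := by
          gcongr
          exact expMoment_sub_expMoment_le hP hη hV hVW
      _ = (∑ s, P s * (W s - V s)) * (1 / A) := by field_simp
      _ ≤ (∑ s, P s * (W s - V s)) * exp (H / η) := mul_le_mul_of_nonneg_left hinvA hgap
      _ = exp (H / η) * ∑ s, P s * (W s - V s) := mul_comm _ _
  unfold klDual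
  linarith

end ExpMoment

theorem kl_robust_value_diff_le_general {S : Type*} [Fintype S]
    (Pstar : S → ℝ) (hP : ∀ s, 0 ≤ Pstar s) (hP1 : ∑ s, Pstar s = 1)
    (σ : ℝ) (hσ : 0 < σ) (H : ℝ) (hH : 0 ≤ H) (ηlo : ℝ) (hηlo : 0 < ηlo)
    (Vup Vlo : S → ℝ)
    (hVupH : ∀ s, Vup s ≤ H)
    (hVlo0 : ∀ s, 0 ≤ Vlo s) (hVloH : ∀ s, Vlo s ≤ H)
    (hle : ∀ s, Vlo s ≤ Vup s) :
    sSup {y : ℝ | ∃ η ∈ Set.Icc ηlo (H / σ),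
        y = -η * Real.log (∑ s, Pstar s * Real.exp (-(Vup s) / η)) - η * σ}
    - sSup {y : ℝ | ∃ η ∈ Set.Icc ηlo (H / σ),
        y = -η * Real.log (∑ s, Pstar s * Real.exp (-(Vlo s) / η)) - η * σ}
      ≤ Real.exp (H / ηlo) * ∑ s, Pstar s * (Vup s - Vlo s) := by
  have hgap : 0 ≤ ∑ s, Pstar s * (Vup s - Vlo s) :=
    sum_nonneg fun s _ => mul_nonneg (hP s) (sub_nonneg.2 (hle s))
  refine sSup_sub_sSup_le_of_le_add (f := klDual Pstar σ Vup) (g := klDual Pstar σ Vlo)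
    (mul_nonneg (exp_pos _).le hgap)
    ⟨H, Set.forall_mem_image.2 fun η hη =>
      klDual_le hP hP1 hσ.le hVloH (hηlo.trans_le hη.1)⟩ fun η hη => ?_
  have hηpos : 0 < η := hηlo.trans_le hη.1
  calc klDual Pstar σ Vup η
      ≤ klDual Pstar σ Vlo η + exp (H / η) * ∑ s, Pstar s * (Vup s - Vlo s) :=
        klDual_le_klDual_add hP hP1 σ hηpos hVlo0 hle hVupH
    _ ≤ klDual Pstar σ Vlo η + exp (H / ηlo) * ∑ s, Pstar s * (Vup s - Vlo s) := by
        gcongr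
        exact hη.1

/-- KL-robust expectation comparison: with
`Φ(W) = sup_{η ∈ [η̲, H/σ]} { -η log E_{P⋆}[exp(-W/η)] - ησ }` and `V̲ ≤ V̄`,
`Φ(V̄) - Φ(V̲) ≤ exp(H/η̲) · E_{P⋆}[V̄ - V̲]`. -/
theorem kl_robust_value_diff_le {S : Type*} [Fintype S] [Nonempty S]
    (Pstar : S → ℝ) (hP : ∀ s, 0 ≤ Pstar s) (hP1 : ∑ s, Pstar s = 1)
    (σ : ℝ) (hσ : 0 < σ) (H : ℝ) (hH : 0 ≤ H) (ηlo : ℝ) (hηlo : 0 < ηlo)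
    (Vup Vlo : S → ℝ)
    (hVup0 : ∀ s, 0 ≤ Vup s) (hVupH : ∀ s, Vup s ≤ H)
    (hVlo0 : ∀ s, 0 ≤ Vlo s) (hVloH : ∀ s, Vlo s ≤ H)
    (hle : ∀ s, Vlo s ≤ Vup s) :
    sSup {y : ℝ | ∃ η ∈ Set.Icc ηlo (H / σ),
        y = -η * Real.log (∑ s, Pstar s * Real.exp (-(Vup s) / η)) - η * σ}
    - sSup {y : ℝ | ∃ η ∈ Set.Icc ηlo (H / σ),
        y = -η * Real.log (∑ s, Pstar s * Real.exp (-(Vlo s) / η)) - η * σ}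
      ≤ Real.exp (H / ηlo) * ∑ s, Pstar s * (Vup s - Vlo s) :=
  kl_robust_value_diff_le_general Pstar hP hP1 σ hσ H hH ηlo hηlo Vup Vlo hVupH hVlo0 hVloH hle
end
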